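/- arXiv:1303.6728 — 2 statements merged into one kernel-verified Lean document; each statement's English description precedes it below -/
import Mathlib

section
/- Let ε > 0 and suppose λ > 0 is such that ∫_{[0,1]²} |P†ψ|² ≥ λ · ∫_{[0,1]²} |ψ|² for every smooth ψ : ℝ² → ℂ that is 1-periodic in both variables. Then for all smooth u, v : ℝ × ℝ² → ℂ that are 1-periodic in x₂ and in x₃ and satisfy u(0,z) = u(ε,z) = 0 for all z ∈ ℝ², one has ∫_{[0,ε]×[0,1]²} ( |∂₁u − i·P†v|² + |∂₁v + i·Pu|² ) ≥ min(λ, 2/ε²) · ∫_{[0,ε]×[0,1]²} ( |u|² + |v|² ). (Flat-model version of the first eigenvalue estimate λ_{𝒟₊} ≥ min{λ_{∂̄*}, 2/ε²} of Theorem 1ev, for the boundary condition u|_{∂A_ε} = 0.) -/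
open MeasureTheory

noncomputable section

/-- Points of the 3-dimensional model `A_ε = [0,ε] × T²`. -/
abbrev Pt : Type := ℝ × (ℝ × ℝ)

/-- Partial derivative in the second coordinate (`x₂`). -/
def d2 (φ : ℝ × ℝ → ℂ) (z : ℝ × ℝ) : ℂ := fderiv ℝ φ z (1, 0)

/-- Partial derivative in the third coordinate (`x₃`). -/
def d3 (φ : ℝ × ℝ → ℂ) (z : ℝ × ℝ) : ℂ := fderiv ℝ φ z (0, 1)

/-- The twisted Cauchy–Riemann operator `Pφ = ∂₂φ + i ∂₃φ + a·φ`. -/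
def POp (a φ : ℝ × ℝ → ℂ) (z : ℝ × ℝ) : ℂ :=
  d2 φ z + Complex.I * d3 φ z + a z * φ z

/-- The formal adjoint `P†φ = −∂₂φ + i ∂₃φ + conj(a)·φ`. -/
def PAdj (a φ : ℝ × ℝ → ℂ) (z : ℝ × ℝ) : ℂ :=
  -(d2 φ z) + Complex.I * d3 φ z + (starRingEnd ℂ) (a z) * φ z

/-- Partial derivative in the first coordinate (`x₁`). -/
def d1 (u : Pt → ℂ) (p : Pt) : ℂ := fderiv ℝ u p (1, 0, 0)

/-- Slice-wise action of `P` on functions of `(x₁, z)`. -/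
def POpS (a : ℝ × ℝ → ℂ) (u : Pt → ℂ) (p : Pt) : ℂ := POp a (fun z => u (p.1, z)) p.2

/-- Slice-wise action of `P†` on functions of `(x₁, z)`. -/
def PAdjS (a : ℝ × ℝ → ℂ) (u : Pt → ℂ) (p : Pt) : ℂ := PAdj a (fun z => u (p.1, z)) p.2

/-- `1`-periodicity in both variables of `ℝ²`. -/
def Per2 (φ : ℝ × ℝ → ℂ) : Prop :=
  (∀ x y : ℝ, φ (x + 1, y) = φ (x, y)) ∧ (∀ x y : ℝ, φ (x, y + 1) = φ (x, y))

/-- `1`-periodicity in `x₂` and `x₃` for functions on `ℝ × ℝ²`. -/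
def Per23 (u : Pt → ℂ) : Prop := ∀ t : ℝ, Per2 (fun z => u (t, z))

/-- The fundamental domain `[0,1]²` of the torus. -/
def T2 : Set (ℝ × ℝ) := Set.Icc (0:ℝ) 1 ×ˢ Set.Icc (0:ℝ) 1

/-- The thin domain `A_ε = [0,ε] × [0,1]²`. -/
def Aeps (ε : ℝ) : Set Pt := Set.Icc (0:ℝ) ε ×ˢ T2

def D (w : Pt) (f : Pt → ℂ) (p : Pt) : ℂ := fderiv ℝ f p w
def e1 : Pt := (1, 0, 0)
def e2 : Pt := (0, 1, 0)
def e3 : Pt := (0, 0, 1)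

lemma smooth_D {n : ℕ∞} {f : Pt → ℂ} (hf : ContDiff ℝ (n + 1) f) (w : Pt) :
    ContDiff ℝ n (D w f) :=
  (hf.fderiv_right (le_refl _)).clm_apply contDiff_const

lemma contDiff_conj {n : WithTop ℕ∞} {f : Pt → ℂ} (hf : ContDiff ℝ n f) :
    ContDiff ℝ n (fun p => (starRingEnd ℂ) (f p)) :=
  (Complex.conjCLE : ℂ ≃L[ℝ] ℂ).contDiff.comp hf

lemma hasDerivAt_slice1 {f : Pt → ℂ} (t : ℝ) (z : ℝ × ℝ) (hf : DifferentiableAt ℝ f (t, z)) :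
    HasDerivAt (fun s => f (s, z)) (D e1 f (t, z)) t := by
  have hc : HasDerivAt (fun s : ℝ => (s, z) : ℝ → Pt) (1, (0, 0)) t :=
    (hasDerivAt_id t).prodMk (hasDerivAt_const t z)
  simpa [e1, D, Function.comp_def] using hf.hasFDerivAt.comp_hasDerivAt t hc

lemma hasDerivAt_slice2 {f : Pt → ℂ} (t x y : ℝ) (hf : DifferentiableAt ℝ f (t, x, y)) :
    HasDerivAt (fun s => f (t, s, y)) (D e2 f (t, x, y)) x := by
  have hc : HasDerivAt (fun s : ℝ => (t, s, y) : ℝ → Pt) (0, (1, 0)) x :=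
    (hasDerivAt_const x t).prodMk ((hasDerivAt_id x).prodMk (hasDerivAt_const x y))
  simpa [e2, D, Function.comp_def] using hf.hasFDerivAt.comp_hasDerivAt x hc

lemma hasDerivAt_slice3 {f : Pt → ℂ} (t x y : ℝ) (hf : DifferentiableAt ℝ f (t, x, y)) :
    HasDerivAt (fun s => f (t, x, s)) (D e3 f (t, x, y)) y := by
  have hc : HasDerivAt (fun s : ℝ => (t, x, s) : ℝ → Pt) (0, (0, 1)) y :=
    (hasDerivAt_const y t).prodMk ((hasDerivAt_const y x).prodMk (hasDerivAt_id y))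
  simpa [e3, D, Function.comp_def] using hf.hasFDerivAt.comp_hasDerivAt y hc

lemma d2_slice {f : Pt → ℂ} (t : ℝ) (z : ℝ × ℝ) (hf : DifferentiableAt ℝ f (t, z)) :
    d2 (fun w => f (t, w)) z = D e2 f (t, z) := by
  have hc : HasFDerivAt (fun w : ℝ × ℝ => (t, w) : (ℝ × ℝ) → Pt)
      ((0 : (ℝ × ℝ) →L[ℝ] ℝ).prod (ContinuousLinearMap.id ℝ (ℝ × ℝ))) z :=
    (hasFDerivAt_const t z).prodMk (hasFDerivAt_id z)
  have h2 := (hf.hasFDerivAt.comp z hc).fderiv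
  rw [d2, D]
  change (fderiv ℝ (f ∘ Prod.mk t) z) (1, 0) = _
  rw [h2]
  simp [e2]

lemma d3_slice {f : Pt → ℂ} (t : ℝ) (z : ℝ × ℝ) (hf : DifferentiableAt ℝ f (t, z)) :
    d3 (fun w => f (t, w)) z = D e3 f (t, z) := by
  have hc : HasFDerivAt (fun w : ℝ × ℝ => (t, w) : (ℝ × ℝ) → Pt)
      ((0 : (ℝ × ℝ) →L[ℝ] ℝ).prod (ContinuousLinearMap.id ℝ (ℝ × ℝ))) z :=
    (hasFDerivAt_const t z).prodMk (hasFDerivAt_id z)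
  have h2 := (hf.hasFDerivAt.comp z hc).fderiv
  rw [d3, D]
  change (fderiv ℝ (f ∘ Prod.mk t) z) (0, 1) = _
  rw [h2]
  simp [e3]



lemma D_conj {f : Pt → ℂ} {p : Pt} (hf : DifferentiableAt ℝ f p) (w : Pt) :
    D w (fun q => (starRingEnd ℂ) (f q)) p = (starRingEnd ℂ) (D w f p) := by
  have h := ((Complex.conjCLE.toContinuousLinearMap).hasFDerivAt.comp p hf.hasFDerivAt).fderiv
  rw [D]
  change (fderiv ℝ ((Complex.conjCLE.toContinuousLinearMap : ℂ → ℂ) ∘ f) p) w = _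
  rw [h]
  rfl

lemma D_mul {f g : Pt → ℂ} {p : Pt} (hf : DifferentiableAt ℝ f p)
    (hg : DifferentiableAt ℝ g p) (w : Pt) :
    D w (fun q => f q * g q) p = f p * D w g p + g p * D w f p := by
  rw [D, fderiv_fun_mul hf hg]
  simp [D]

lemma D_add {f g : Pt → ℂ} {p : Pt} (hf : DifferentiableAt ℝ f p)
    (hg : DifferentiableAt ℝ g p) (w : Pt) :
    D w (fun q => f q + g q) p = D w f p + D w g p := by
  rw [D, fderiv_fun_add hf hg]; rfl

lemma D_const_mul {g : Pt → ℂ} {p : Pt} (hg : DifferentiableAt ℝ g p) (c : ℂ) (w : Pt) :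
    D w (fun q => c * g q) p = c * D w g p := by
  rw [D, fderiv_const_mul hg c]; simp [D]

lemma D_pi2 {a : ℝ × ℝ → ℂ} {p : Pt} (ha : DifferentiableAt ℝ a p.2) (w : Pt) :
    D w (fun q : Pt => a q.2) p = fderiv ℝ a p.2 w.2 := by
  have h := (ha.hasFDerivAt.comp p hasFDerivAt_snd).fderiv
  rw [D]
  change (fderiv ℝ (a ∘ Prod.snd) p) w = _
  rw [h]
  rfl

lemma D_comm {f : Pt → ℂ} (hf : ContDiff ℝ 2 f) (w w' : Pt) (p : Pt) :
    D w (D w' f) p = D w' (D w f) p := by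
  have hd : DifferentiableAt ℝ (fderiv ℝ f) p :=
    ((hf.fderiv_right (le_refl _)).differentiable one_ne_zero).differentiableAt
  have key : ∀ v v' : Pt, D v (D v' f) p = fderiv ℝ (fderiv ℝ f) p v v' := by
    intro v v'
    rw [D]
    have : D v' f = fun q => (fderiv ℝ f q) v' := rfl
    rw [this, fderiv_clm_apply hd (differentiableAt_const v')]
    simp
  rw [key, key]
  exact (hf.contDiffAt.isSymmSndFDerivAt (by simp [minSmoothness_of_isRCLikeNormedField])) w w'



lemma smooth_D2 {f : Pt → ℂ} (hf : ContDiff ℝ 3 f) (w : Pt) : ContDiff ℝ 2 (D w f) := by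
  have := smooth_D (n := 2) (f := f) (by exact_mod_cast hf) w
  exact_mod_cast this

lemma smooth_D1 {f : Pt → ℂ} (hf : ContDiff ℝ 2 f) (w : Pt) : ContDiff ℝ 1 (D w f) := by
  have := smooth_D (n := 1) (f := f) (by exact_mod_cast hf) w
  exact_mod_cast this

lemma POpS_eq {a : ℝ × ℝ → ℂ} {u : Pt → ℂ} (hu : Differentiable ℝ u) (p : Pt) :
    POpS a u p = D e2 u p + Complex.I * D e3 u p + a p.2 * u p := by
  rw [POpS, POp, d2_slice p.1 p.2 (hu _),
    d3_slice p.1 p.2 (hu _)]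

lemma PAdjS_eq {a : ℝ × ℝ → ℂ} {v : Pt → ℂ} (hv : Differentiable ℝ v) (p : Pt) :
    PAdjS a v p = -(D e2 v p) + Complex.I * D e3 v p + (starRingEnd ℂ) (a p.2) * v p := by
  rw [PAdjS, PAdj, d2_slice p.1 p.2 (hv _),
    d3_slice p.1 p.2 (hv _)]



section Identity
variable {a : ℝ × ℝ → ℂ} {u v : Pt → ℂ}

lemma cross_identity (ha : ContDiff ℝ 3 a) (hu : ContDiff ℝ 3 u) (hv : ContDiff ℝ 3 v)
    (p : Pt) :
    D e1 (fun q => (starRingEnd ℂ) (v q) * POpS a u q) p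
      - D e2 (fun q => (starRingEnd ℂ) (v q) * D e1 u q) p
      - Complex.I * D e3 (fun q => (starRingEnd ℂ) (v q) * D e1 u q) p
    = (starRingEnd ℂ) (D e1 v p) * POpS a u p
      + (starRingEnd ℂ) (PAdjS a v p) * D e1 u p := by
  have hu2 : ContDiff ℝ 2 u := hu.of_le (by norm_num)
  have hv2 : ContDiff ℝ 2 v := hv.of_le (by norm_num)
  have du : Differentiable ℝ u := hu.differentiable (by norm_num)
  have dv : Differentiable ℝ v := hv.differentiable (by norm_num)
  have da : Differentiable ℝ a := ha.differentiable (by norm_num)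
  have dDu2 : Differentiable ℝ (D e2 u) := (smooth_D2 hu e2).differentiable (by norm_num)
  have dDu3 : Differentiable ℝ (D e3 u) := (smooth_D2 hu e3).differentiable (by norm_num)
  have dDu1 : Differentiable ℝ (D e1 u) := (smooth_D2 hu e1).differentiable (by norm_num)
  have dcv : Differentiable ℝ (fun q => (starRingEnd ℂ) (v q)) :=
    (contDiff_conj hv2).differentiable (by norm_num)
  have dapi : Differentiable ℝ (fun q : Pt => a q.2) := da.comp differentiable_snd
  have dau : Differentiable ℝ (fun q : Pt => a q.2 * u q) := dapi.mul du
  have dIDu3 : Differentiable ℝ (fun q => Complex.I * D e3 u q) :=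
    (differentiable_const _).mul dDu3
  have dsum1 : Differentiable ℝ (fun q => D e2 u q + Complex.I * D e3 u q) := dDu2.add dIDu3
  have dQ : Differentiable ℝ (fun q => D e2 u q + Complex.I * D e3 u q + a q.2 * u q) :=
    dsum1.add dau
  -- derivative of a ∘ snd in direction e1 vanishes
  have hae1 : D e1 (fun q : Pt => a q.2) p = 0 := by
    rw [D_pi2 (da _) e1]
    have : (e1.2 : ℝ × ℝ) = 0 := rfl
    rw [this, map_zero]
  -- compute D e1 F
  have hF : D e1 (fun q => (starRingEnd ℂ) (v q) * POpS a u q) p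
      = (starRingEnd ℂ) (v p) *
          (D e1 (D e2 u) p + Complex.I * D e1 (D e3 u) p + a p.2 * D e1 u p)
        + (D e2 u p + Complex.I * D e3 u p + a p.2 * u p) * (starRingEnd ℂ) (D e1 v p) := by
    simp only [POpS_eq du]
    rw [D_mul (dcv _) (dQ _) e1, D_conj (dv _) e1]
    rw [D_add (dsum1 _) (dau _) e1, D_add (dDu2 _) (dIDu3 _) e1,
      D_const_mul (dDu3 _) Complex.I e1, D_mul (dapi _) (du _) e1, hae1]
    ring
  -- compute D e2 G
  have hG2 : D e2 (fun q => (starRingEnd ℂ) (v q) * D e1 u q) p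
      = (starRingEnd ℂ) (v p) * D e2 (D e1 u) p
        + D e1 u p * (starRingEnd ℂ) (D e2 v p) := by
    rw [D_mul (dcv _) (dDu1 _) e2, D_conj (dv _) e2]
  have hG3 : D e3 (fun q => (starRingEnd ℂ) (v q) * D e1 u q) p
      = (starRingEnd ℂ) (v p) * D e3 (D e1 u) p
        + D e1 u p * (starRingEnd ℂ) (D e3 v p) := by
    rw [D_mul (dcv _) (dDu1 _) e3, D_conj (dv _) e3]
  rw [hF, hG2, hG3, D_comm hu2 e1 e2 p, D_comm hu2 e1 e3 p]
  rw [POpS_eq du, PAdjS_eq dv]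
  simp only [map_add, map_mul, map_neg, Complex.conj_conj, Complex.conj_I,
    RingHomCompTriple.comp_apply, RingHom.id_apply]
  ring

end Identity


lemma sq_norm_identity (A B C Dd : ℂ) :
    ‖A - Complex.I * B‖ ^ 2 + ‖C + Complex.I * Dd‖ ^ 2
      = ‖A‖ ^ 2 + ‖B‖ ^ 2 + ‖C‖ ^ 2 + ‖Dd‖ ^ 2
        - 2 * ((starRingEnd ℂ) C * Dd + (starRingEnd ℂ) B * A).im := by
  have hn : ∀ z : ℂ, ‖z‖ ^ 2 = z.re ^ 2 + z.im ^ 2 := by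
    intro z
    rw [Complex.sq_norm, Complex.normSq_apply]
    ring
  simp only [hn, Complex.add_re, Complex.sub_re, Complex.mul_re, Complex.mul_im,
    Complex.add_im, Complex.sub_im, Complex.I_re, Complex.I_im, Complex.conj_re,
    Complex.conj_im]
  ring

lemma integral_Icc_eq_interval {E : Type*} [NormedAddCommGroup E] [NormedSpace ℝ E]
    {b : ℝ} (hb : 0 ≤ b) (f : ℝ → E) :
    ∫ x in Set.Icc (0:ℝ) b, f x = ∫ x in (0:ℝ)..b, f x := by
  rw [intervalIntegral.integral_of_le hb, integral_Icc_eq_integral_Ioc]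

lemma D_periodic {f : Pt → ℂ} (hf : Differentiable ℝ f) (c : Pt)
    (hper : ∀ p, f (p + c) = f p) (w p) : D w f (p + c) = D w f p := by
  have hin : HasFDerivAt (fun q : Pt => q + c) (ContinuousLinearMap.id ℝ Pt) p :=
    (hasFDerivAt_id p).add_const c
  have h1 : HasFDerivAt (fun q : Pt => f (q + c))
      ((fderiv ℝ f (p + c)).comp (ContinuousLinearMap.id ℝ Pt)) p :=
    (hf (p + c)).hasFDerivAt.comp p hin
  have h2 : (fun q : Pt => f (q + c)) = f := funext hper
  have h3 := h1.fderiv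
  rw [h2] at h3
  rw [D, D, h3]
  rfl



section Fubini
variable {E : Type*} [NormedAddCommGroup E] [NormedSpace ℝ E]

lemma Pt_integral_prod {α β : Type*} [MeasureSpace α] [MeasureSpace β]
    [SFinite (volume : Measure α)] [SFinite (volume : Measure β)]
    {s : Set α} {t : Set β} {f : α × β → E} (hf : IntegrableOn f (s ×ˢ t)) :
    ∫ p in s ×ˢ t, f p = ∫ x in s, ∫ y in t, f (x, y) := by
  rw [Measure.volume_eq_prod] at hf ⊢
  exact setIntegral_prod f hf

lemma Pt_integral_prod_symm {α β : Type*} [MeasureSpace α] [MeasureSpace β]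
    [SFinite (volume : Measure α)] [SFinite (volume : Measure β)]
    {s : Set α} {t : Set β} {f : α × β → E} (hf : IntegrableOn f (s ×ˢ t)) :
    ∫ p in s ×ˢ t, f p = ∫ y in t, ∫ x in s, f (x, y) := by
  rw [Measure.volume_eq_prod] at hf ⊢
  rw [IntegrableOn, ← Measure.prod_restrict] at hf
  rw [← Measure.prod_restrict]
  exact integral_prod_symm f hf

lemma marg_left {α β : Type*} [MeasureSpace α] [MeasureSpace β]
    [SFinite (volume : Measure α)] [SFinite (volume : Measure β)]
    {s : Set α} {t : Set β} {f : α × β → E} (hf : IntegrableOn f (s ×ˢ t)) :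
    IntegrableOn (fun x => ∫ y in t, f (x, y)) s := by
  rw [Measure.volume_eq_prod, IntegrableOn, ← Measure.prod_restrict] at hf
  exact hf.integral_prod_left

lemma marg_right {α β : Type*} [MeasureSpace α] [MeasureSpace β]
    [SFinite (volume : Measure α)] [SFinite (volume : Measure β)]
    {s : Set α} {t : Set β} {f : α × β → E} (hf : IntegrableOn f (s ×ˢ t)) :
    IntegrableOn (fun y => ∫ x in s, f (x, y)) t := by
  rw [Measure.volume_eq_prod, IntegrableOn, ← Measure.prod_restrict] at hf
  exact hf.integral_prod_right

lemma isCompact_Aeps (ε : ℝ) : IsCompact (Aeps ε) := by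
  rw [Aeps, T2]
  exact isCompact_Icc.prod (isCompact_Icc.prod isCompact_Icc)

lemma isCompact_T2 : IsCompact T2 := by
  rw [T2]; exact isCompact_Icc.prod isCompact_Icc

lemma cont_integrableOn_Aeps {f : Pt → E} (hf : Continuous f) (ε : ℝ) :
    IntegrableOn f (Aeps ε) :=
  hf.continuousOn.integrableOn_compact (isCompact_Aeps ε)

lemma cont_integrableOn_T2 {f : ℝ × ℝ → E} (hf : Continuous f) :
    IntegrableOn f T2 :=
  hf.continuousOn.integrableOn_compact isCompact_T2

lemma cont_D {f : Pt → ℂ} (hf : ContDiff ℝ 1 f) (w : Pt) : Continuous (D w f) := by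
  have := smooth_D (n := 0) (f := f) (by exact_mod_cast hf) w
  exact this.continuous

end Fubini


lemma Box1 {ε : ℝ} (hε : 0 ≤ ε) {F : Pt → ℂ} (hF : ContDiff ℝ 1 F)
    (h0 : ∀ z, F (0, z) = 0) (h1 : ∀ z, F (ε, z) = 0) :
    ∫ p in Aeps ε, D e1 F p = 0 := by
  have hc : Continuous (D e1 F) := cont_D hF e1
  have hint : IntegrableOn (D e1 F) (Aeps ε) := cont_integrableOn_Aeps hc ε
  rw [Aeps] at hint ⊢
  rw [Pt_integral_prod_symm hint]
  have hz : ∀ z : ℝ × ℝ, (∫ t in Set.Icc (0:ℝ) ε, D e1 F (t, z)) = 0 := by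
    intro z
    rw [integral_Icc_eq_interval hε]
    have key : ∫ t in (0:ℝ)..ε, D e1 F (t, z) = F (ε, z) - F (0, z) :=
      intervalIntegral.integral_eq_sub_of_hasDerivAt
        (fun t _ => hasDerivAt_slice1 t z ((hF.differentiable one_ne_zero) _))
        ((hc.comp (continuous_id.prodMk continuous_const)).intervalIntegrable 0 ε)
    rw [key, h0, h1, sub_self]
  simp only [hz]
  exact integral_zero _ _

lemma Box2 {ε : ℝ} {G : Pt → ℂ} (hG : ContDiff ℝ 1 G)
    (hper : ∀ t x y : ℝ, G (t, x + 1, y) = G (t, x, y)) :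
    ∫ p in Aeps ε, D e2 G p = 0 := by
  have hc : Continuous (D e2 G) := cont_D hG e2
  have hint : IntegrableOn (D e2 G) (Aeps ε) := cont_integrableOn_Aeps hc ε
  rw [Aeps] at hint ⊢
  rw [Pt_integral_prod hint]
  have hz : ∀ t : ℝ, (∫ z in T2, D e2 G (t, z)) = 0 := by
    intro t
    have hint2 : IntegrableOn (fun z : ℝ × ℝ => D e2 G (t, z)) T2 :=
      cont_integrableOn_T2 (hc.comp (continuous_const.prodMk continuous_id))
    rw [T2] at hint2 ⊢
    rw [Pt_integral_prod_symm hint2]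
    have hy : ∀ y : ℝ, (∫ x in Set.Icc (0:ℝ) 1, D e2 G (t, x, y)) = 0 := by
      intro y
      rw [integral_Icc_eq_interval zero_le_one]
      have key : ∫ x in (0:ℝ)..1, D e2 G (t, x, y) = G (t, 1, y) - G (t, 0, y) :=
        intervalIntegral.integral_eq_sub_of_hasDerivAt
          (fun x _ => hasDerivAt_slice2 t x y ((hG.differentiable one_ne_zero) _))
          ((hc.comp (continuous_const.prodMk
            (continuous_id.prodMk continuous_const))).intervalIntegrable 0 1)
      have h01 : G (t, 0 + 1, y) = G (t, 0, y) := hper t 0 y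
      rw [zero_add] at h01
      rw [key, h01, sub_self]
    simp only [hy]
    exact integral_zero _ _
  simp only [hz]
  exact integral_zero _ _

lemma Box3 {ε : ℝ} {G : Pt → ℂ} (hG : ContDiff ℝ 1 G)
    (hper : ∀ t x y : ℝ, G (t, x, y + 1) = G (t, x, y)) :
    ∫ p in Aeps ε, D e3 G p = 0 := by
  have hc : Continuous (D e3 G) := cont_D hG e3
  have hint : IntegrableOn (D e3 G) (Aeps ε) := cont_integrableOn_Aeps hc ε
  rw [Aeps] at hint ⊢
  rw [Pt_integral_prod hint]
  have hz : ∀ t : ℝ, (∫ z in T2, D e3 G (t, z)) = 0 := by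
    intro t
    have hint2 : IntegrableOn (fun z : ℝ × ℝ => D e3 G (t, z)) T2 :=
      cont_integrableOn_T2 (hc.comp (continuous_const.prodMk continuous_id))
    rw [T2] at hint2 ⊢
    rw [Pt_integral_prod hint2]
    have hy : ∀ x : ℝ, (∫ y in Set.Icc (0:ℝ) 1, D e3 G (t, x, y)) = 0 := by
      intro x
      rw [integral_Icc_eq_interval zero_le_one]
      have key : ∫ y in (0:ℝ)..1, D e3 G (t, x, y) = G (t, x, 1) - G (t, x, 0) :=
        intervalIntegral.integral_eq_sub_of_hasDerivAt
          (fun y _ => hasDerivAt_slice3 t x y ((hG.differentiable one_ne_zero) _))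
          ((hc.comp (continuous_const.prodMk
            (continuous_const.prodMk continuous_id))).intervalIntegrable 0 1)
      have h01 : G (t, x, 0 + 1) = G (t, x, 0) := hper t x 0
      rw [zero_add] at h01
      rw [key, h01, sub_self]
    simp only [hy]
    exact integral_zero _ _
  simp only [hz]
  exact integral_zero _ _



lemma cs_interval {t : ℝ} (ht : 0 ≤ t) {f : ℝ → ℝ} (hf : Continuous f)
    (hnn : ∀ s, 0 ≤ f s) :
    (∫ s in (0:ℝ)..t, f s) ^ 2 ≤ t * ∫ s in (0:ℝ)..t, f s ^ 2 := by
  set μ : Measure ℝ := volume.restrict (Set.Ioc (0:ℝ) t) with hμ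
  have hfin : IsFiniteMeasure μ := by
    constructor
    rw [hμ, Measure.restrict_apply_univ]
    exact measure_Ioc_lt_top
  have hpq : Real.HolderConjugate 2 2 := by constructor <;> norm_num
  -- bounds for Memℒp
  obtain ⟨C, hC⟩ : ∃ C, ∀ s ∈ Set.Icc (0:ℝ) t, ‖f s‖ ≤ C :=
    isCompact_Icc.exists_bound_of_continuousOn hf.continuousOn
  have hmem : MemLp f (ENNReal.ofReal 2) μ := by
    refine MemLp.of_bound hf.aestronglyMeasurable C ?_
    rw [hμ]
    refine (ae_restrict_iff' measurableSet_Ioc).2 (Filter.Eventually.of_forall ?_)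
    intro s hs
    exact hC s ⟨le_of_lt hs.1, hs.2⟩
  have hmem1 : MemLp (fun _ : ℝ => (1:ℝ)) (ENNReal.ofReal 2) μ := memLp_const 1
  have hH := integral_mul_le_Lp_mul_Lq_of_nonneg hpq
    (Filter.Eventually.of_forall hnn) (Filter.Eventually.of_forall fun _ => zero_le_one)
    hmem hmem1
  simp only [mul_one] at hH
  -- identify pieces
  have h1 : ∫ s, (1:ℝ) ^ (2:ℝ) ∂μ = t := by
    simp [hμ, Real.volume_Ioc, ht, ENNReal.toReal_ofReal]
  have h2 : ∀ s : ℝ, f s ^ (2:ℝ) = f s ^ (2:ℕ) := fun s => by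
    rw [← Real.rpow_natCast (f s) 2]; norm_num
  rw [h1] at hH
  simp only [h2] at hH
  have hIoc : ∫ s, f s ∂μ = ∫ s in (0:ℝ)..t, f s := by
    rw [intervalIntegral.integral_of_le ht]
  have hIoc2 : ∫ s, f s ^ (2:ℕ) ∂μ = ∫ s in (0:ℝ)..t, f s ^ 2 := by
    rw [intervalIntegral.integral_of_le ht]
  rw [hIoc, hIoc2] at hH
  have hA : (0:ℝ) ≤ ∫ s in (0:ℝ)..t, f s ^ 2 := by
    apply intervalIntegral.integral_nonneg ht
    intro s _
    positivity
  have hsq : (∫ s in (0:ℝ)..t, f s) ^ 2 ≤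
      ((∫ s in (0:ℝ)..t, f s ^ 2) ^ ((1:ℝ)/2) * t ^ ((1:ℝ)/2)) ^ 2 := by
    apply pow_le_pow_left₀ _ hH
    apply intervalIntegral.integral_nonneg ht
    intro s _
    exact hnn s
  refine hsq.trans (le_of_eq ?_)
  rw [mul_pow, ← Real.rpow_natCast (_ ^ ((1:ℝ)/2)) 2, ← Real.rpow_natCast (t ^ ((1:ℝ)/2)) 2,
    ← Real.rpow_mul hA, ← Real.rpow_mul ht]
  norm_num
  ring

lemma poincare_1d {ε : ℝ} (hε : 0 < ε) {g g' : ℝ → ℂ}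
    (hg : ∀ t, HasDerivAt g (g' t) t) (hc : Continuous g') (h0 : g 0 = 0) :
    ∫ t in Set.Icc (0:ℝ) ε, ‖g t‖ ^ 2 ≤ ε ^ 2 / 2 * ∫ t in Set.Icc (0:ℝ) ε, ‖g' t‖ ^ 2 := by
  have hgc : Continuous g := by
    rw [continuous_iff_continuousAt]; exact fun t => (hg t).continuousAt
  set M : ℝ := ∫ s in (0:ℝ)..ε, ‖g' s‖ ^ 2 with hM
  have hMnn : 0 ≤ M := intervalIntegral.integral_nonneg (le_of_lt hε) (fun s _ => by positivity)
  have hpt : ∀ t ∈ Set.Icc (0:ℝ) ε, ‖g t‖ ^ 2 ≤ t * M := by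
    intro t ht
    have hftc : ∫ s in (0:ℝ)..t, g' s = g t - g 0 :=
      intervalIntegral.integral_eq_sub_of_hasDerivAt (fun s _ => hg s)
        (hc.intervalIntegrable 0 t)
    rw [h0, sub_zero] at hftc
    have hnorm : ‖g t‖ ≤ ∫ s in (0:ℝ)..t, ‖g' s‖ := by
      rw [← hftc]
      exact intervalIntegral.norm_integral_le_integral_norm ht.1
    have hcs := cs_interval ht.1 hc.norm (fun s => norm_nonneg _)
    have hmono : ∫ s in (0:ℝ)..t, ‖g' s‖ ^ 2 ≤ M := by
      rw [hM]
      apply intervalIntegral.integral_mono_interval le_rfl ht.1 ht.2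
        (Filter.Eventually.of_forall fun s => (sq_nonneg ‖g' s‖ : _))
        ((hc.norm.pow 2).intervalIntegrable 0 ε)
    calc ‖g t‖ ^ 2 ≤ (∫ s in (0:ℝ)..t, ‖g' s‖) ^ 2 :=
          pow_le_pow_left₀ (norm_nonneg _) hnorm 2
      _ ≤ t * ∫ s in (0:ℝ)..t, ‖g' s‖ ^ 2 := hcs
      _ ≤ t * M := by
          apply mul_le_mul_of_nonneg_left hmono ht.1
  have hint1 : IntegrableOn (fun t => ‖g t‖ ^ 2) (Set.Icc (0:ℝ) ε) :=
    ((hgc.norm.pow 2).continuousOn).integrableOn_compact isCompact_Icc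
  have hint2 : IntegrableOn (fun t : ℝ => t * M) (Set.Icc (0:ℝ) ε) :=
    ((continuous_id.mul continuous_const).continuousOn).integrableOn_compact isCompact_Icc
  have h1 : ∫ t in Set.Icc (0:ℝ) ε, ‖g t‖ ^ 2 ≤ ∫ t in Set.Icc (0:ℝ) ε, t * M :=
    setIntegral_mono_on hint1 hint2 measurableSet_Icc hpt
  have h2 : ∫ t in Set.Icc (0:ℝ) ε, t * M = ε ^ 2 / 2 * M := by
    rw [integral_mul_const, integral_Icc_eq_interval (le_of_lt hε),
      integral_id]
    ring
  have h3 : ∫ t in Set.Icc (0:ℝ) ε, ‖g' t‖ ^ 2 = M := by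
    rw [hM, integral_Icc_eq_interval (le_of_lt hε)]
  rw [h3]
  rw [h2] at h1
  exact h1


lemma per23_add2 {u : Pt → ℂ} (hup : Per23 u) :
    ∀ p : Pt, u (p + ((0:ℝ),(1:ℝ),(0:ℝ))) = u p := by
  rintro ⟨t, x, y⟩
  have h := (hup t).1 x y
  simpa using h

lemma per23_add3 {u : Pt → ℂ} (hup : Per23 u) :
    ∀ p : Pt, u (p + ((0:ℝ),(0:ℝ),(1:ℝ))) = u p := by
  rintro ⟨t, x, y⟩
  have h := (hup t).2 x y
  simpa using h

lemma measurableSet_Aeps (ε : ℝ) : MeasurableSet (Aeps ε) := by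
  rw [Aeps, T2]
  exact measurableSet_Icc.prod (measurableSet_Icc.prod measurableSet_Icc)

lemma measurableSet_T2 : MeasurableSet T2 := by
  rw [T2]; exact measurableSet_Icc.prod measurableSet_Icc


/-- Flat-model version of the first eigenvalue estimate
`λ_{𝒟₊} ≥ min{λ_{∂̄*}, 2/ε²}` (Theorem 1ev, boundary condition `u|_{∂A_ε} = 0`). -/
theorem first_eigenvalue_estimate_Dplus
    (ε : ℝ) (hε : 0 < ε) (a : ℝ × ℝ → ℂ) (ha : ContDiff ℝ (⊤ : ℕ∞) a) (hap : Per2 a)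
    (lam : ℝ) (hlam : 0 < lam)
    (hP : ∀ ψ : ℝ × ℝ → ℂ, ContDiff ℝ (⊤ : ℕ∞) ψ → Per2 ψ →
      (∫ z in T2, ‖PAdj a ψ z‖ ^ 2) ≥ lam * ∫ z in T2, ‖ψ z‖ ^ 2)
    (u v : Pt → ℂ) (hu : ContDiff ℝ (⊤ : ℕ∞) u) (hv : ContDiff ℝ (⊤ : ℕ∞) v)
    (hup : Per23 u) (hvp : Per23 v)
    (hbu : ∀ z : ℝ × ℝ, u (0, z) = 0 ∧ u (ε, z) = 0) :
    (∫ p in Aeps ε, (‖d1 u p - Complex.I * PAdjS a v p‖ ^ 2 +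
        ‖d1 v p + Complex.I * POpS a u p‖ ^ 2)) ≥
      min lam (2 / ε ^ 2) * ∫ p in Aeps ε, (‖u p‖ ^ 2 + ‖v p‖ ^ 2) := by
  -- smoothness bookkeeping
  have ha3 : ContDiff ℝ 3 a := ha.of_le (by exact WithTop.coe_le_coe.mpr le_top)
  have hu3 : ContDiff ℝ 3 u := hu.of_le (by exact WithTop.coe_le_coe.mpr le_top)
  have hv3 : ContDiff ℝ 3 v := hv.of_le (by exact WithTop.coe_le_coe.mpr le_top)
  have ha2 : ContDiff ℝ 2 a := ha3.of_le (by norm_num)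
  have hu2 : ContDiff ℝ 2 u := hu3.of_le (by norm_num)
  have hv2 : ContDiff ℝ 2 v := hv3.of_le (by norm_num)
  have hu1 : ContDiff ℝ 1 u := hu2.of_le (by norm_num)
  have hv1 : ContDiff ℝ 1 v := hv2.of_le (by norm_num)
  have du : Differentiable ℝ u := hu1.differentiable one_ne_zero
  have dv : Differentiable ℝ v := hv1.differentiable one_ne_zero
  -- operator rewrites and smoothness
  have hPOpS_eq : POpS a u = fun p => D e2 u p + Complex.I * D e3 u p + a p.2 * u p :=
    funext (POpS_eq du)
  have hPAdjS_eq : PAdjS a v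
      = fun p => -(D e2 v p) + Complex.I * D e3 v p + (starRingEnd ℂ) (a p.2) * v p :=
    funext (PAdjS_eq dv)
  have hQ2 : ContDiff ℝ 2 (POpS a u) := by
    rw [hPOpS_eq]
    exact ((smooth_D2 hu3 e2).add (contDiff_const.mul (smooth_D2 hu3 e3))).add
      ((ha2.comp contDiff_snd).mul hu2)
  have hB2 : ContDiff ℝ 2 (PAdjS a v) := by
    rw [hPAdjS_eq]
    exact (((smooth_D2 hv3 e2).neg).add (contDiff_const.mul (smooth_D2 hv3 e3))).add
      (((Complex.conjCLE : ℂ ≃L[ℝ] ℂ).contDiff.comp (ha2.comp contDiff_snd)).mul hv2)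
  have hF1 : ContDiff ℝ 1 (fun q => (starRingEnd ℂ) (v q) * POpS a u q) :=
    (contDiff_conj hv1).mul (hQ2.of_le (by norm_num))
  have hG1 : ContDiff ℝ 1 (fun q => (starRingEnd ℂ) (v q) * D e1 u q) :=
    (contDiff_conj hv1).mul (smooth_D1 hu2 e1)
  -- continuity
  have cA : Continuous (D e1 u) := cont_D hu1 e1
  have cC : Continuous (D e1 v) := cont_D hv1 e1
  have cQ : Continuous (POpS a u) := hQ2.continuous
  have cB : Continuous (PAdjS a v) := hB2.continuous
  -- the pointwise integrand identity
  have hpoint : ∀ p : Pt,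
      ‖d1 u p - Complex.I * PAdjS a v p‖ ^ 2 + ‖d1 v p + Complex.I * POpS a u p‖ ^ 2
      = (‖D e1 u p‖ ^ 2 + ‖PAdjS a v p‖ ^ 2 + ‖D e1 v p‖ ^ 2 + ‖POpS a u p‖ ^ 2)
        + ((-2 : ℝ) * (D e1 (fun q => (starRingEnd ℂ) (v q) * POpS a u q) p).im
          + ((2 : ℝ) * (D e2 (fun q => (starRingEnd ℂ) (v q) * D e1 u q) p).im
            + (2 : ℝ) * (D e3 (fun q => (starRingEnd ℂ) (v q) * D e1 u q) p).re)) := by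
    intro p
    have hd1u : d1 u p = D e1 u p := rfl
    have hd1v : d1 v p = D e1 v p := rfl
    have h1 := sq_norm_identity (D e1 u p) (PAdjS a v p) (D e1 v p) (POpS a u p)
    have h2 := cross_identity ha3 hu3 hv3 p
    rw [hd1u, hd1v, h1, ← h2]
    simp only [Complex.sub_im, Complex.mul_im, Complex.I_re, Complex.I_im]
    ring
  -- integrability of all pieces
  have iS1 : IntegrableOn (fun p => ‖D e1 u p‖ ^ 2) (Aeps ε) :=
    cont_integrableOn_Aeps ((cA.norm).pow 2) ε
  have iS2 : IntegrableOn (fun p => ‖PAdjS a v p‖ ^ 2) (Aeps ε) :=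
    cont_integrableOn_Aeps ((cB.norm).pow 2) ε
  have iS3 : IntegrableOn (fun p => ‖D e1 v p‖ ^ 2) (Aeps ε) :=
    cont_integrableOn_Aeps ((cC.norm).pow 2) ε
  have iS4 : IntegrableOn (fun p => ‖POpS a u p‖ ^ 2) (Aeps ε) :=
    cont_integrableOn_Aeps ((cQ.norm).pow 2) ε
  have iF : IntegrableOn (D e1 (fun q => (starRingEnd ℂ) (v q) * POpS a u q)) (Aeps ε) :=
    cont_integrableOn_Aeps (cont_D hF1 e1) ε
  have iG2 : IntegrableOn (D e2 (fun q => (starRingEnd ℂ) (v q) * D e1 u q)) (Aeps ε) :=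
    cont_integrableOn_Aeps (cont_D hG1 e2) ε
  have iG3 : IntegrableOn (D e3 (fun q => (starRingEnd ℂ) (v q) * D e1 u q)) (Aeps ε) :=
    cont_integrableOn_Aeps (cont_D hG1 e3) ε
  have iC1 : IntegrableOn
      (fun p => (-2 : ℝ) * (D e1 (fun q => (starRingEnd ℂ) (v q) * POpS a u q) p).im)
      (Aeps ε) := (iF.im.const_mul _)
  have iC2 : IntegrableOn
      (fun p => (2 : ℝ) * (D e2 (fun q => (starRingEnd ℂ) (v q) * D e1 u q) p).im)
      (Aeps ε) := (iG2.im.const_mul _)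
  have iC3 : IntegrableOn
      (fun p => (2 : ℝ) * (D e3 (fun q => (starRingEnd ℂ) (v q) * D e1 u q) p).re)
      (Aeps ε) := (iG3.re.const_mul _)
  have iu2 : IntegrableOn (fun p => ‖u p‖ ^ 2) (Aeps ε) :=
    cont_integrableOn_Aeps ((hu1.continuous.norm).pow 2) ε
  have iv2 : IntegrableOn (fun p => ‖v p‖ ^ 2) (Aeps ε) :=
    cont_integrableOn_Aeps ((hv1.continuous.norm).pow 2) ε
  -- vanishing of the divergence terms
  have hPu0 : ∀ z : ℝ × ℝ, POpS a u (0, z) = 0 := by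
    intro z
    have hzero : (fun w => u ((0:ℝ), w)) = fun _ => (0:ℂ) := funext fun w => (hbu w).1
    show POp a (fun w => u ((0:ℝ), w)) z = 0
    rw [hzero]
    simp [POp, d2, d3]
  have hPuε : ∀ z : ℝ × ℝ, POpS a u (ε, z) = 0 := by
    intro z
    have hzero : (fun w => u (ε, w)) = fun _ => (0:ℂ) := funext fun w => (hbu w).2
    show POp a (fun w => u (ε, w)) z = 0
    rw [hzero]
    simp [POp, d2, d3]
  have hBox1 : ∫ p in Aeps ε, D e1 (fun q => (starRingEnd ℂ) (v q) * POpS a u q) p = 0 := by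
    apply Box1 (le_of_lt hε) hF1
    · intro z; show (starRingEnd ℂ) (v (0, z)) * POpS a u (0, z) = 0
      rw [hPu0 z, mul_zero]
    · intro z; show (starRingEnd ℂ) (v (ε, z)) * POpS a u (ε, z) = 0
      rw [hPuε z, mul_zero]
  have hGper2 : ∀ t x y : ℝ,
      (fun q => (starRingEnd ℂ) (v q) * D e1 u q) (t, x + 1, y)
        = (fun q => (starRingEnd ℂ) (v q) * D e1 u q) (t, x, y) := by
    intro t x y
    have hv' : v (t, x + 1, y) = v (t, x, y) := (hvp t).1 x y
    have hu' : D e1 u (t, x + 1, y) = D e1 u (t, x, y) := by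
      have h := D_periodic du ((0:ℝ),(1:ℝ),(0:ℝ)) (per23_add2 hup) e1 (t, x, y)
      simpa using h
    simp only [hv', hu']
  have hGper3 : ∀ t x y : ℝ,
      (fun q => (starRingEnd ℂ) (v q) * D e1 u q) (t, x, y + 1)
        = (fun q => (starRingEnd ℂ) (v q) * D e1 u q) (t, x, y) := by
    intro t x y
    have hv' : v (t, x, y + 1) = v (t, x, y) := (hvp t).2 x y
    have hu' : D e1 u (t, x, y + 1) = D e1 u (t, x, y) := by
      have h := D_periodic du ((0:ℝ),(0:ℝ),(1:ℝ)) (per23_add3 hup) e1 (t, x, y)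
      simpa using h
    simp only [hv', hu']
  have hBox2 : ∫ p in Aeps ε, D e2 (fun q => (starRingEnd ℂ) (v q) * D e1 u q) p = 0 :=
    Box2 hG1 hGper2
  have hBox3 : ∫ p in Aeps ε, D e3 (fun q => (starRingEnd ℂ) (v q) * D e1 u q) p = 0 :=
    Box3 hG1 hGper3
  -- the cross term integrates to zero
  have hC1 : ∫ p in Aeps ε,
      (-2 : ℝ) * (D e1 (fun q => (starRingEnd ℂ) (v q) * POpS a u q) p).im = 0 := by
    rw [integral_const_mul]
    have h := integral_im iF
    rw [hBox1] at h
    have h2 : ∫ p in Aeps ε,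
        (D e1 (fun q => (starRingEnd ℂ) (v q) * POpS a u q) p).im = 0 :=
      h.trans (by simp)
    rw [h2, mul_zero]
  have hC2 : ∫ p in Aeps ε,
      (2 : ℝ) * (D e2 (fun q => (starRingEnd ℂ) (v q) * D e1 u q) p).im = 0 := by
    rw [integral_const_mul]
    have h := integral_im iG2
    rw [hBox2] at h
    have h2 : ∫ p in Aeps ε,
        (D e2 (fun q => (starRingEnd ℂ) (v q) * D e1 u q) p).im = 0 :=
      h.trans (by simp)
    rw [h2, mul_zero]
  have hC3 : ∫ p in Aeps ε,
      (2 : ℝ) * (D e3 (fun q => (starRingEnd ℂ) (v q) * D e1 u q) p).re = 0 := by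
    rw [integral_const_mul]
    have h := integral_re iG3
    rw [hBox3] at h
    have h2 : ∫ p in Aeps ε,
        (D e3 (fun q => (starRingEnd ℂ) (v q) * D e1 u q) p).re = 0 :=
      h.trans (by simp)
    rw [h2, mul_zero]
  -- split the total integral
  have htotal : ∫ p in Aeps ε, (‖d1 u p - Complex.I * PAdjS a v p‖ ^ 2 +
        ‖d1 v p + Complex.I * POpS a u p‖ ^ 2)
      = (∫ p in Aeps ε, ‖D e1 u p‖ ^ 2) + (∫ p in Aeps ε, ‖PAdjS a v p‖ ^ 2)
        + (∫ p in Aeps ε, ‖D e1 v p‖ ^ 2) + (∫ p in Aeps ε, ‖POpS a u p‖ ^ 2) := by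
    have iS12 : IntegrableOn (fun p => ‖D e1 u p‖ ^ 2 + ‖PAdjS a v p‖ ^ 2) (Aeps ε) :=
      iS1.add iS2
    have iS123 : IntegrableOn
        (fun p => ‖D e1 u p‖ ^ 2 + ‖PAdjS a v p‖ ^ 2 + ‖D e1 v p‖ ^ 2) (Aeps ε) :=
      iS12.add iS3
    have iSsum : IntegrableOn
        (fun p => ‖D e1 u p‖ ^ 2 + ‖PAdjS a v p‖ ^ 2 + ‖D e1 v p‖ ^ 2 + ‖POpS a u p‖ ^ 2)
        (Aeps ε) := iS123.add iS4
    have iC23 : IntegrableOn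
        (fun p => (2 : ℝ) * (D e2 (fun q => (starRingEnd ℂ) (v q) * D e1 u q) p).im
          + (2 : ℝ) * (D e3 (fun q => (starRingEnd ℂ) (v q) * D e1 u q) p).re) (Aeps ε) :=
      iC2.add iC3
    have iCsum : IntegrableOn
        (fun p => (-2 : ℝ) * (D e1 (fun q => (starRingEnd ℂ) (v q) * POpS a u q) p).im
          + ((2 : ℝ) * (D e2 (fun q => (starRingEnd ℂ) (v q) * D e1 u q) p).im
           + (2 : ℝ) * (D e3 (fun q => (starRingEnd ℂ) (v q) * D e1 u q) p).re)) (Aeps ε) :=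
      iC1.add iC23
    have hCsum : ∫ p in Aeps ε,
        ((-2 : ℝ) * (D e1 (fun q => (starRingEnd ℂ) (v q) * POpS a u q) p).im
          + ((2 : ℝ) * (D e2 (fun q => (starRingEnd ℂ) (v q) * D e1 u q) p).im
           + (2 : ℝ) * (D e3 (fun q => (starRingEnd ℂ) (v q) * D e1 u q) p).re)) = 0 := by
      have e23 : ∫ p in Aeps ε,
          ((2 : ℝ) * (D e2 (fun q => (starRingEnd ℂ) (v q) * D e1 u q) p).im
            + (2 : ℝ) * (D e3 (fun q => (starRingEnd ℂ) (v q) * D e1 u q) p).re)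
          = (∫ p in Aeps ε, (2 : ℝ) * (D e2 (fun q => (starRingEnd ℂ) (v q) * D e1 u q) p).im)
            + ∫ p in Aeps ε, (2 : ℝ) * (D e3 (fun q => (starRingEnd ℂ) (v q) * D e1 u q) p).re :=
        integral_add iC2 iC3
      calc ∫ p in Aeps ε,
          ((-2 : ℝ) * (D e1 (fun q => (starRingEnd ℂ) (v q) * POpS a u q) p).im
            + ((2 : ℝ) * (D e2 (fun q => (starRingEnd ℂ) (v q) * D e1 u q) p).im
             + (2 : ℝ) * (D e3 (fun q => (starRingEnd ℂ) (v q) * D e1 u q) p).re))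
          = (∫ p in Aeps ε,
              (-2 : ℝ) * (D e1 (fun q => (starRingEnd ℂ) (v q) * POpS a u q) p).im)
            + ∫ p in Aeps ε,
              ((2 : ℝ) * (D e2 (fun q => (starRingEnd ℂ) (v q) * D e1 u q) p).im
               + (2 : ℝ) * (D e3 (fun q => (starRingEnd ℂ) (v q) * D e1 u q) p).re) :=
            integral_add iC1 iC23
        _ = 0 := by rw [e23, hC1, hC2, hC3]; ring
    have hS12 : ∫ p in Aeps ε, (‖D e1 u p‖ ^ 2 + ‖PAdjS a v p‖ ^ 2)
        = (∫ p in Aeps ε, ‖D e1 u p‖ ^ 2) + ∫ p in Aeps ε, ‖PAdjS a v p‖ ^ 2 :=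
      integral_add iS1 iS2
    have hS123 : ∫ p in Aeps ε, (‖D e1 u p‖ ^ 2 + ‖PAdjS a v p‖ ^ 2 + ‖D e1 v p‖ ^ 2)
        = (∫ p in Aeps ε, ‖D e1 u p‖ ^ 2) + (∫ p in Aeps ε, ‖PAdjS a v p‖ ^ 2)
          + ∫ p in Aeps ε, ‖D e1 v p‖ ^ 2 := by
      calc ∫ p in Aeps ε, (‖D e1 u p‖ ^ 2 + ‖PAdjS a v p‖ ^ 2 + ‖D e1 v p‖ ^ 2)
          = (∫ p in Aeps ε, (‖D e1 u p‖ ^ 2 + ‖PAdjS a v p‖ ^ 2))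
            + ∫ p in Aeps ε, ‖D e1 v p‖ ^ 2 := integral_add iS12 iS3
        _ = _ := by rw [hS12]
    have hSsum : ∫ p in Aeps ε,
        (‖D e1 u p‖ ^ 2 + ‖PAdjS a v p‖ ^ 2 + ‖D e1 v p‖ ^ 2 + ‖POpS a u p‖ ^ 2)
        = (∫ p in Aeps ε, ‖D e1 u p‖ ^ 2) + (∫ p in Aeps ε, ‖PAdjS a v p‖ ^ 2)
          + (∫ p in Aeps ε, ‖D e1 v p‖ ^ 2) + ∫ p in Aeps ε, ‖POpS a u p‖ ^ 2 := by
      calc ∫ p in Aeps ε,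
          (‖D e1 u p‖ ^ 2 + ‖PAdjS a v p‖ ^ 2 + ‖D e1 v p‖ ^ 2 + ‖POpS a u p‖ ^ 2)
          = (∫ p in Aeps ε, (‖D e1 u p‖ ^ 2 + ‖PAdjS a v p‖ ^ 2 + ‖D e1 v p‖ ^ 2))
            + ∫ p in Aeps ε, ‖POpS a u p‖ ^ 2 := integral_add iS123 iS4
        _ = _ := by rw [hS123]
    calc ∫ p in Aeps ε, (‖d1 u p - Complex.I * PAdjS a v p‖ ^ 2 +
          ‖d1 v p + Complex.I * POpS a u p‖ ^ 2)
        = ∫ p in Aeps ε,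
            ((‖D e1 u p‖ ^ 2 + ‖PAdjS a v p‖ ^ 2 + ‖D e1 v p‖ ^ 2 + ‖POpS a u p‖ ^ 2)
              + ((-2 : ℝ) * (D e1 (fun q => (starRingEnd ℂ) (v q) * POpS a u q) p).im
                + ((2 : ℝ) * (D e2 (fun q => (starRingEnd ℂ) (v q) * D e1 u q) p).im
                 + (2 : ℝ) * (D e3 (fun q => (starRingEnd ℂ) (v q) * D e1 u q) p).re))) := by
          simp only [hpoint]
      _ = (∫ p in Aeps ε,
            (‖D e1 u p‖ ^ 2 + ‖PAdjS a v p‖ ^ 2 + ‖D e1 v p‖ ^ 2 + ‖POpS a u p‖ ^ 2))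
          + ∫ p in Aeps ε,
            ((-2 : ℝ) * (D e1 (fun q => (starRingEnd ℂ) (v q) * POpS a u q) p).im
              + ((2 : ℝ) * (D e2 (fun q => (starRingEnd ℂ) (v q) * D e1 u q) p).im
               + (2 : ℝ) * (D e3 (fun q => (starRingEnd ℂ) (v q) * D e1 u q) p).re)) :=
          integral_add iSsum iCsum
      _ = (∫ p in Aeps ε, ‖D e1 u p‖ ^ 2) + (∫ p in Aeps ε, ‖PAdjS a v p‖ ^ 2)
          + (∫ p in Aeps ε, ‖D e1 v p‖ ^ 2) + ∫ p in Aeps ε, ‖POpS a u p‖ ^ 2 := by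
          rw [hCsum, hSsum, add_zero]
  -- Poincaré in the x₁ direction
  have hPoin : ∫ p in Aeps ε, ‖u p‖ ^ 2 ≤ ε ^ 2 / 2 * ∫ p in Aeps ε, ‖D e1 u p‖ ^ 2 := by
    have hiu := iu2
    have hid := iS1
    rw [Aeps] at hiu hid ⊢
    rw [Pt_integral_prod_symm hiu, Pt_integral_prod_symm hid, ← integral_const_mul]
    apply setIntegral_mono_on (marg_right hiu) ((marg_right hid).const_mul _) measurableSet_T2
    intro z _
    exact poincare_1d hε (fun t => hasDerivAt_slice1 t z (du _))
      (cA.comp (continuous_id.prodMk continuous_const)) ((hbu z).1)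
  -- spectral assumption slice-wise
  have hPs : lam * ∫ p in Aeps ε, ‖v p‖ ^ 2 ≤ ∫ p in Aeps ε, ‖PAdjS a v p‖ ^ 2 := by
    have hiv := iv2
    have hiB := iS2
    rw [Aeps] at hiv hiB ⊢
    rw [Pt_integral_prod hiv, Pt_integral_prod hiB, ← integral_const_mul]
    apply setIntegral_mono_on ((marg_left hiv).const_mul _) (marg_left hiB) measurableSet_Icc
    intro t _
    have hψ : ContDiff ℝ (⊤ : ℕ∞) (fun z => v (t, z)) := hv.comp (contDiff_const.prodMk contDiff_id)
    exact hP (fun z => v (t, z)) hψ (hvp t)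
  -- nonnegativity
  have hnn : ∀ {f : Pt → ℝ}, (∀ p, 0 ≤ f p) → 0 ≤ ∫ p in Aeps ε, f p := by
    intro f hf
    exact setIntegral_nonneg (measurableSet_Aeps ε) (fun p _ => hf p)
  have hu_nn : 0 ≤ ∫ p in Aeps ε, ‖u p‖ ^ 2 := hnn (fun p => by positivity)
  have hv_nn : 0 ≤ ∫ p in Aeps ε, ‖v p‖ ^ 2 := hnn (fun p => by positivity)
  have hS3_nn : 0 ≤ ∫ p in Aeps ε, ‖D e1 v p‖ ^ 2 := hnn (fun p => by positivity)
  have hS4_nn : 0 ≤ ∫ p in Aeps ε, ‖POpS a u p‖ ^ 2 := hnn (fun p => by positivity)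
  have hS1_nn : 0 ≤ ∫ p in Aeps ε, ‖D e1 u p‖ ^ 2 := hnn (fun p => by positivity)
  -- Poincaré rearranged
  have h2eps : (2 / ε ^ 2) * ∫ p in Aeps ε, ‖u p‖ ^ 2 ≤ ∫ p in Aeps ε, ‖D e1 u p‖ ^ 2 := by
    have hεp : (0:ℝ) < ε ^ 2 := by positivity
    calc (2 / ε ^ 2) * ∫ p in Aeps ε, ‖u p‖ ^ 2
        ≤ (2 / ε ^ 2) * (ε ^ 2 / 2 * ∫ p in Aeps ε, ‖D e1 u p‖ ^ 2) :=
          mul_le_mul_of_nonneg_left hPoin (by positivity)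
      _ = ∫ p in Aeps ε, ‖D e1 u p‖ ^ 2 := by field_simp
  -- final assembly
  have hsum : ∫ p in Aeps ε, (‖u p‖ ^ 2 + ‖v p‖ ^ 2)
      = (∫ p in Aeps ε, ‖u p‖ ^ 2) + ∫ p in Aeps ε, ‖v p‖ ^ 2 := integral_add iu2 iv2
  rw [ge_iff_le, htotal, hsum, mul_add]
  have hmu : min lam (2 / ε ^ 2) * ∫ p in Aeps ε, ‖u p‖ ^ 2
      ≤ (2 / ε ^ 2) * ∫ p in Aeps ε, ‖u p‖ ^ 2 :=
    mul_le_mul_of_nonneg_right (min_le_right _ _) hu_nn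
  have hmv : min lam (2 / ε ^ 2) * ∫ p in Aeps ε, ‖v p‖ ^ 2
      ≤ lam * ∫ p in Aeps ε, ‖v p‖ ^ 2 :=
    mul_le_mul_of_nonneg_right (min_le_left _ _) hv_nn
  linarith
end
end

section
/- Let ε > 0. For all smooth u, v : ℝ × ℝ² → ℂ that are 1-periodic in x₂ and in x₃ and satisfy v(0,z) = v(ε,z) = 0 for all z ∈ ℝ², one has the exact L² identity ∫_{[0,ε]×[0,1]²} ( |∂₁u − i·P†v|² + |∂₁v + i·Pu|² ) = ∫_{[0,ε]×[0,1]²} ( |∂₁u|² + |∂₁v|² + |P†v|² + |Pu|² ); that is, all cross terms in the expansion of ‖D(u,v)‖²_{L²} vanish under the boundary condition v|_{∂A_ε} = 0. (The key integration-by-parts identity in the proof of Theorem 1ev.) -/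
open MeasureTheory

noncomputable section

/-! ### Auxiliary machinery -/

section Aux

/-- Directional derivative data. -/
def HasDir (f : Pt → ℂ) (p w : Pt) (c : ℂ) : Prop :=
  ∃ f' : Pt →L[ℝ] ℂ, HasFDerivAt f f' p ∧ f' w = c

lemma HasDir.fderiv_eq {f : Pt → ℂ} {p w : Pt} {c : ℂ} (h : HasDir f p w c) :
    fderiv ℝ f p w = c := by
  obtain ⟨f', hf, hc⟩ := h; rw [hf.fderiv]; exact hc

lemma hasDir_fderiv {f : Pt → ℂ} {p : Pt} (w : Pt) (hf : DifferentiableAt ℝ f p) :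
    HasDir f p w (fderiv ℝ f p w) := ⟨_, hf.hasFDerivAt, rfl⟩

lemma hasDir_const (c : ℂ) (p w : Pt) : HasDir (fun _ => c) p w 0 :=
  ⟨0, hasFDerivAt_const c p, rfl⟩

lemma HasDir.add {f g : Pt → ℂ} {p w : Pt} {cf cg : ℂ} (hf : HasDir f p w cf)
    (hg : HasDir g p w cg) : HasDir (fun q => f q + g q) p w (cf + cg) := by
  obtain ⟨f', hf1, hf2⟩ := hf; obtain ⟨g', hg1, hg2⟩ := hg
  exact ⟨f' + g', hf1.add hg1, by simp [hf2, hg2]⟩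

lemma HasDir.mul {f g : Pt → ℂ} {p w : Pt} {cf cg : ℂ} (hf : HasDir f p w cf)
    (hg : HasDir g p w cg) : HasDir (fun q => f q * g q) p w (cf * g p + f p * cg) := by
  obtain ⟨f', hf1, hf2⟩ := hf; obtain ⟨g', hg1, hg2⟩ := hg
  refine ⟨f p • g' + g p • f', hf1.mul hg1, ?_⟩
  simp [hf2, hg2, smul_eq_mul]; ring

lemma HasDir.const_mul {f : Pt → ℂ} {p w : Pt} {cf : ℂ} (c : ℂ) (hf : HasDir f p w cf) :
    HasDir (fun q => c * f q) p w (c * cf) := by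
  have := (hasDir_const c p w).mul hf
  simpa using this

lemma HasDir.conj {f : Pt → ℂ} {p w : Pt} {cf : ℂ} (hf : HasDir f p w cf) :
    HasDir (fun q => (starRingEnd ℂ) (f q)) p w ((starRingEnd ℂ) cf) := by
  obtain ⟨f', hf1, hf2⟩ := hf
  exact ⟨(Complex.conjCLE : ℂ →L[ℝ] ℂ).comp f',
    (Complex.conjCLE : ℂ →L[ℝ] ℂ).hasFDerivAt.comp p hf1, by simp [hf2]⟩

lemma hasDir_asnd_e1 (a : ℝ × ℝ → ℂ) (ha : Differentiable ℝ a) (p : Pt) :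
    HasDir (fun q : Pt => a q.2) p ((1:ℝ), (0:ℝ), (0:ℝ)) 0 := by
  refine ⟨(fderiv ℝ a p.2).comp (ContinuousLinearMap.snd ℝ ℝ (ℝ × ℝ)),
    (ha p.2).hasFDerivAt.comp p hasFDerivAt_snd, ?_⟩
  have h : (ContinuousLinearMap.snd ℝ ℝ (ℝ × ℝ)) ((1:ℝ), (0:ℝ), (0:ℝ)) = (0 : ℝ × ℝ) := rfl
  simp [h]

/-- slice derivative equals full partial derivative -/
lemma fderiv_slice (f : Pt → ℂ) {t : ℝ} {z : ℝ × ℝ} (hf : DifferentiableAt ℝ f (t, z))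
    (w : ℝ × ℝ) : fderiv ℝ (fun y => f (t, y)) z w = fderiv ℝ f (t, z) (0, w) := by
  have h := (hf.hasFDerivAt.comp z (hasFDerivAt_prodMk_right t z)).fderiv
  rw [show (fun y => f (t, y)) = (f ∘ fun y => (t, y)) from rfl, h]
  simp

/-- symmetry of second derivatives -/
lemma dd_symm (f : Pt → ℂ) (hf : ContDiff ℝ (⊤ : ℕ∞) f) (p v w : Pt) :
    fderiv ℝ (fun q => fderiv ℝ f q w) p v = fderiv ℝ (fun q => fderiv ℝ f q v) p w := by
  have hd : Differentiable ℝ (fderiv ℝ f) := (hf.fderiv_right (m := (⊤ : ℕ∞)) (by simp)).differentiable (by simp)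
  have key : ∀ a b : Pt, fderiv ℝ (fun q => fderiv ℝ f q b) p a = fderiv ℝ (fderiv ℝ f) p a b := by
    intro a b
    have h := fderiv_clm_apply (hd p) (differentiableAt_const b)
    simp only [fderiv_fun_const, Pi.zero_apply, ContinuousLinearMap.comp_zero, zero_add] at h
    rw [h]; rfl
  rw [key v w, key w v]
  exact second_derivative_symmetric (fun y => ((hf.differentiable (by simp)) y).hasFDerivAt)
    (hd p).hasFDerivAt v w

/-- invariance of `fderiv` under a translation-periodicity -/
lemma fderiv_shift (f : Pt → ℂ) (hf : Differentiable ℝ f) (c : Pt)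
    (hper : ∀ p : Pt, f (p + c) = f p) (p : Pt) : fderiv ℝ f (p + c) = fderiv ℝ f p := by
  have h1 : HasFDerivAt (fun q : Pt => f (q + c)) (fderiv ℝ f (p + c)) p := by
    have := (hf (p + c)).hasFDerivAt.comp p ((hasFDerivAt_id p).add_const c)
    exact this
  have h2 : HasFDerivAt f (fderiv ℝ f (p + c)) p := by
    have e : (fun q : Pt => f (q + c)) = f := funext hper
    rwa [e] at h1
  exact (h2.fderiv).symm

lemma fd_cont (g : Pt → ℂ) (hg : ContDiff ℝ (⊤ : ℕ∞) g) (w : Pt) :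
    Continuous fun p => fderiv ℝ g p w :=
  ((hg.fderiv_right (m := (⊤ : ℕ∞)) (by simp)).continuous).clm_apply continuous_const

lemma fd_smooth (g : Pt → ℂ) (hg : ContDiff ℝ (⊤ : ℕ∞) g) (w : Pt) :
    ContDiff ℝ (⊤ : ℕ∞) fun p => fderiv ℝ g p w :=
  (hg.fderiv_right (m := (⊤ : ℕ∞)) (by simp)).clm_apply contDiff_const

lemma fub_symm {α β : Type*} [MeasureSpace α] [MeasureSpace β]
    [SigmaFinite (volume : Measure α)] [SigmaFinite (volume : Measure β)]
    (s : Set α) (t : Set β) (f : α × β → ℂ) (hf : IntegrableOn f (s ×ˢ t)) :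
    ∫ p in s ×ˢ t, f p = ∫ y in t, ∫ x in s, f (x, y) := by
  rw [show (volume : Measure (α × β)) = (volume : Measure α).prod volume from
    MeasureTheory.Measure.volume_eq_prod α β] at hf ⊢
  simp only [← Measure.prod_restrict, IntegrableOn] at hf ⊢
  exact integral_prod_symm f hf

lemma fub {α β : Type*} [MeasureSpace α] [MeasureSpace β]
    [SigmaFinite (volume : Measure α)] [SigmaFinite (volume : Measure β)]
    (s : Set α) (t : Set β) (f : α × β → ℂ) (hf : IntegrableOn f (s ×ˢ t)) :
    ∫ p in s ×ˢ t, f p = ∫ x in s, ∫ y in t, f (x, y) := by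
  rw [show (volume : Measure (α × β)) = (volume : Measure α).prod volume from
    MeasureTheory.Measure.volume_eq_prod α β] at hf ⊢
  simp only [← Measure.prod_restrict, IntegrableOn] at hf ⊢
  exact integral_prod f hf

lemma line_ftc {a b : ℝ} (hab : a ≤ b) (g : ℝ → ℂ) (g' : ℝ → ℂ)
    (hd : ∀ x, HasDerivAt g (g' x) x) (hc : Continuous g') :
    ∫ x in Set.Icc a b, g' x = g b - g a := by
  rw [MeasureTheory.integral_Icc_eq_integral_Ioc, ← intervalIntegral.integral_of_le hab]
  exact intervalIntegral.integral_eq_sub_of_hasDerivAt (fun x _ => hd x)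
    (hc.intervalIntegrable a b)

lemma hasDerivAt_x1 (g : Pt → ℂ) (hg : Differentiable ℝ g) (z : ℝ × ℝ) (x : ℝ) :
    HasDerivAt (fun x : ℝ => g (x, z)) (fderiv ℝ g (x, z) ((1:ℝ), (0:ℝ), (0:ℝ))) x := by
  have h1 : HasDerivAt (fun x : ℝ => ((x, z) : Pt)) ((1:ℝ), (0:ℝ), (0:ℝ)) x := by
    exact (hasDerivAt_id x).prodMk (hasDerivAt_const x z)
  exact ((hg (x, z)).hasFDerivAt).comp_hasDerivAt x h1

lemma hasDerivAt_x2 (g : Pt → ℂ) (hg : Differentiable ℝ g) (x t : ℝ) (s : ℝ) :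
    HasDerivAt (fun s : ℝ => g (x, s, t)) (fderiv ℝ g (x, s, t) ((0:ℝ), (1:ℝ), (0:ℝ))) s := by
  have h1 : HasDerivAt (fun s : ℝ => ((x, s, t) : Pt)) ((0:ℝ), (1:ℝ), (0:ℝ)) s := by
    simpa using (hasDerivAt_const s x).prodMk ((hasDerivAt_id s).prodMk (hasDerivAt_const s t))
  exact ((hg (x, s, t)).hasFDerivAt).comp_hasDerivAt s h1

lemma hasDerivAt_x3 (g : Pt → ℂ) (hg : Differentiable ℝ g) (x s : ℝ) (t : ℝ) :
    HasDerivAt (fun t : ℝ => g (x, s, t)) (fderiv ℝ g (x, s, t) ((0:ℝ), (0:ℝ), (1:ℝ))) t := by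
  have h1 : HasDerivAt (fun t : ℝ => ((x, s, t) : Pt)) ((0:ℝ), (0:ℝ), (1:ℝ)) t := by
    simpa using (hasDerivAt_const t x).prodMk ((hasDerivAt_const t s).prodMk (hasDerivAt_id t))
  exact ((hg (x, s, t)).hasFDerivAt).comp_hasDerivAt t h1

/-- The cube `[0,ε] × [0,1] × [0,1]`. -/
def Cube (ε : ℝ) : Set Pt := (Set.Icc (0:ℝ) ε) ×ˢ ((Set.Icc (0:ℝ) 1) ×ˢ (Set.Icc (0:ℝ) 1))

lemma cube_compact (ε : ℝ) : IsCompact (Cube ε) :=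
  isCompact_Icc.prod (isCompact_Icc.prod isCompact_Icc)

lemma int_zero_1 {ε : ℝ} (hε : 0 ≤ ε) (g : Pt → ℂ) (hg : ContDiff ℝ (⊤ : ℕ∞) g)
    (h0 : ∀ z : ℝ × ℝ, g (0, z) = 0) (h1 : ∀ z : ℝ × ℝ, g (ε, z) = 0) :
    ∫ p in Cube ε, fderiv ℝ g p ((1:ℝ), (0:ℝ), (0:ℝ)) = 0 := by
  have hc : Continuous fun p : Pt => fderiv ℝ g p ((1:ℝ), (0:ℝ), (0:ℝ)) := fd_cont g hg _
  have hint := hc.continuousOn.integrableOn_compact (μ := volume) (cube_compact ε)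
  rw [Cube] at hint ⊢
  rw [fub_symm _ _ _ hint]
  have inner : ∀ z : ℝ × ℝ,
      (∫ x in Set.Icc (0:ℝ) ε, fderiv ℝ g (x, z) ((1:ℝ), (0:ℝ), (0:ℝ))) = 0 := by
    intro z
    rw [line_ftc hε (fun x => g (x, z)) _
      (fun x => hasDerivAt_x1 g (hg.differentiable (by simp)) z x)
      (hc.comp (continuous_id.prodMk continuous_const))]
    rw [h0, h1]; ring
  simp only [inner, integral_zero]

lemma int_zero_2 {ε : ℝ} (g : Pt → ℂ) (hg : ContDiff ℝ (⊤ : ℕ∞) g)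
    (hper : ∀ x s t : ℝ, g (x, s + 1, t) = g (x, s, t)) :
    ∫ p in Cube ε, fderiv ℝ g p ((0:ℝ), (1:ℝ), (0:ℝ)) = 0 := by
  have hc : Continuous fun p : Pt => fderiv ℝ g p ((0:ℝ), (1:ℝ), (0:ℝ)) := fd_cont g hg _
  have hint := hc.continuousOn.integrableOn_compact (μ := volume) (cube_compact ε)
  rw [Cube] at hint ⊢
  rw [fub _ _ _ hint]
  have inner : ∀ x : ℝ,
      (∫ z in (Set.Icc (0:ℝ) 1) ×ˢ (Set.Icc (0:ℝ) 1),
        fderiv ℝ g (x, z) ((0:ℝ), (1:ℝ), (0:ℝ))) = 0 := by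
    intro x
    have hc2 : Continuous fun z : ℝ × ℝ => fderiv ℝ g (x, z) ((0:ℝ), (1:ℝ), (0:ℝ)) :=
      hc.comp (continuous_const.prodMk continuous_id)
    have hint2 : IntegrableOn (fun z : ℝ × ℝ => fderiv ℝ g (x, z) ((0:ℝ), (1:ℝ), (0:ℝ)))
        ((Set.Icc (0:ℝ) 1) ×ˢ (Set.Icc (0:ℝ) 1)) volume :=
      hc2.continuousOn.integrableOn_compact (μ := volume) (isCompact_Icc.prod isCompact_Icc)
    rw [fub_symm _ _ _ hint2]
    have inner2 : ∀ t : ℝ,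
        (∫ s in Set.Icc (0:ℝ) 1, fderiv ℝ g (x, s, t) ((0:ℝ), (1:ℝ), (0:ℝ))) = 0 := by
      intro t
      rw [line_ftc zero_le_one (fun s => g (x, s, t)) _
        (fun s => hasDerivAt_x2 g (hg.differentiable (by simp)) x t s)
        (hc2.comp (continuous_id.prodMk continuous_const))]
      have h := hper x 0 t
      rw [zero_add] at h
      rw [h]; ring
    simp only [inner2, integral_zero]
  simp only [inner, integral_zero]

lemma int_zero_3 {ε : ℝ} (g : Pt → ℂ) (hg : ContDiff ℝ (⊤ : ℕ∞) g)
    (hper : ∀ x s t : ℝ, g (x, s, t + 1) = g (x, s, t)) :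
    ∫ p in Cube ε, fderiv ℝ g p ((0:ℝ), (0:ℝ), (1:ℝ)) = 0 := by
  have hc : Continuous fun p : Pt => fderiv ℝ g p ((0:ℝ), (0:ℝ), (1:ℝ)) := fd_cont g hg _
  have hint := hc.continuousOn.integrableOn_compact (μ := volume) (cube_compact ε)
  rw [Cube] at hint ⊢
  rw [fub _ _ _ hint]
  have inner : ∀ x : ℝ,
      (∫ z in (Set.Icc (0:ℝ) 1) ×ˢ (Set.Icc (0:ℝ) 1),
        fderiv ℝ g (x, z) ((0:ℝ), (0:ℝ), (1:ℝ))) = 0 := by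
    intro x
    have hc2 : Continuous fun z : ℝ × ℝ => fderiv ℝ g (x, z) ((0:ℝ), (0:ℝ), (1:ℝ)) :=
      hc.comp (continuous_const.prodMk continuous_id)
    have hint2 : IntegrableOn (fun z : ℝ × ℝ => fderiv ℝ g (x, z) ((0:ℝ), (0:ℝ), (1:ℝ)))
        ((Set.Icc (0:ℝ) 1) ×ˢ (Set.Icc (0:ℝ) 1)) volume :=
      hc2.continuousOn.integrableOn_compact (μ := volume) (isCompact_Icc.prod isCompact_Icc)
    rw [fub _ _ _ hint2]
    have inner2 : ∀ s : ℝ,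
        (∫ t in Set.Icc (0:ℝ) 1, fderiv ℝ g (x, s, t) ((0:ℝ), (0:ℝ), (1:ℝ))) = 0 := by
      intro s
      rw [line_ftc zero_le_one (fun t => g (x, s, t)) _
        (fun t => hasDerivAt_x3 g (hg.differentiable (by simp)) x s t)
        (hc2.comp (continuous_const.prodMk continuous_id))]
      have h := hper x s 0
      rw [zero_add] at h
      rw [h]; ring
    simp only [inner2, integral_zero]
  simp only [inner, integral_zero]

/-- the pointwise algebraic identity -/
lemma pointwise_alg (up vp u1 u2 u3 v1 v2 v3 du2 du3 ap W1 Q2 Q3 : ℂ)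
    (hW1 : W1 = Complex.I * (starRingEnd ℂ) v1 * (u2 + Complex.I * u3 + ap * up) +
      Complex.I * (starRingEnd ℂ) vp * (du2 + Complex.I * du3 + ap * u1))
    (hQ2 : Q2 = (starRingEnd ℂ) v2 * u1 + (starRingEnd ℂ) vp * du2)
    (hQ3 : Q3 = (starRingEnd ℂ) v3 * u1 + (starRingEnd ℂ) vp * du3) :
    ‖u1 - Complex.I * (-v2 + Complex.I * v3 + (starRingEnd ℂ) ap * vp)‖ ^ 2 +
      ‖v1 + Complex.I * (u2 + Complex.I * u3 + ap * up)‖ ^ 2 -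
      (‖u1‖ ^ 2 + ‖v1‖ ^ 2 + ‖-v2 + Complex.I * v3 + (starRingEnd ℂ) ap * vp‖ ^ 2 +
        ‖u2 + Complex.I * u3 + ap * up‖ ^ 2) =
    2 * W1.re + 2 * Q2.im + 2 * Q3.re := by
  subst hW1 hQ2 hQ3
  simp only [Complex.sq_norm, Complex.normSq_apply, Complex.add_re,
    Complex.add_im, Complex.sub_re, Complex.sub_im, Complex.mul_re, Complex.mul_im,
    Complex.neg_re, Complex.neg_im, Complex.I_re, Complex.I_im, Complex.conj_re, Complex.conj_im]
  ring

end Aux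

/-- The key integration-by-parts identity in the proof of Theorem 1ev: under the
boundary condition `v|_{∂A_ε} = 0`, all cross terms in `‖D(u,v)‖²_{L²}` vanish. -/
theorem cross_terms_vanish
    (ε : ℝ) (hε : 0 < ε) (a : ℝ × ℝ → ℂ) (ha : ContDiff ℝ (⊤ : ℕ∞) a) (hap : Per2 a)
    (u v : Pt → ℂ) (hu : ContDiff ℝ (⊤ : ℕ∞) u) (hv : ContDiff ℝ (⊤ : ℕ∞) v)
    (hup : Per23 u) (hvp : Per23 v)
    (hbv : ∀ z : ℝ × ℝ, v (0, z) = 0 ∧ v (ε, z) = 0) :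
    (∫ p in Aeps ε, (‖d1 u p - Complex.I * PAdjS a v p‖ ^ 2 +
        ‖d1 v p + Complex.I * POpS a u p‖ ^ 2)) =
      ∫ p in Aeps ε, (‖d1 u p‖ ^ 2 + ‖d1 v p‖ ^ 2 +
        ‖PAdjS a v p‖ ^ 2 + ‖POpS a u p‖ ^ 2) := by
  classical
  have hu' : Differentiable ℝ u := hu.differentiable (by simp)
  have hv' : Differentiable ℝ v := hv.differentiable (by simp)
  have ha' : Differentiable ℝ a := ha.differentiable (by simp)
  -- rewrite the slice operators in terms of full partial derivatives
  have hPO : ∀ p : Pt, POpS a u p =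
      fderiv ℝ u p ((0:ℝ), (1:ℝ), (0:ℝ)) + Complex.I * fderiv ℝ u p ((0:ℝ), (0:ℝ), (1:ℝ)) +
        a p.2 * u p := by
    intro p
    simp only [POpS, POp, d2, d3]
    rw [fderiv_slice u (hu' (p.1, p.2)) (1, 0), fderiv_slice u (hu' (p.1, p.2)) (0, 1)]
  have hPA : ∀ p : Pt, PAdjS a v p =
      -(fderiv ℝ v p ((0:ℝ), (1:ℝ), (0:ℝ))) + Complex.I * fderiv ℝ v p ((0:ℝ), (0:ℝ), (1:ℝ)) +
        (starRingEnd ℂ) (a p.2) * v p := by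
    intro p
    simp only [PAdjS, PAdj, d2, d3]
    rw [fderiv_slice v (hv' (p.1, p.2)) (1, 0), fderiv_slice v (hv' (p.1, p.2)) (0, 1)]
  simp only [d1, hPO, hPA]
  rw [show Aeps ε = Cube ε from rfl]
  -- the two auxiliary "divergence potential" functions
  set W : Pt → ℂ := fun q => Complex.I * (starRingEnd ℂ) (v q) *
      (fderiv ℝ u q ((0:ℝ), (1:ℝ), (0:ℝ)) + Complex.I * fderiv ℝ u q ((0:ℝ), (0:ℝ), (1:ℝ)) +
        a q.2 * u q) with hWdef
  set Q : Pt → ℂ := fun q => (starRingEnd ℂ) (v q) * fderiv ℝ u q ((1:ℝ), (0:ℝ), (0:ℝ))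
    with hQdef
  -- smoothness
  have hconj : ∀ g : Pt → ℂ, ContDiff ℝ (⊤ : ℕ∞) g → ContDiff ℝ (⊤ : ℕ∞) fun p => (starRingEnd ℂ) (g p) :=
    fun g hg => ((Complex.conjCLE : ℂ →L[ℝ] ℂ).contDiff).comp hg
  have hA : ContDiff ℝ (⊤ : ℕ∞) fun q : Pt => a q.2 := ha.comp contDiff_snd
  have hW : ContDiff ℝ (⊤ : ℕ∞) W := by
    rw [hWdef]
    exact (contDiff_const.mul (hconj v hv)).mul
      (((fd_smooth u hu _).add (contDiff_const.mul (fd_smooth u hu _))).add (hA.mul hu))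
  have hQ : ContDiff ℝ (⊤ : ℕ∞) Q := by
    rw [hQdef]
    exact (hconj v hv).mul (fd_smooth u hu _)
  -- periodicity of u and its derivative
  have hu_per2 : ∀ q : Pt, u (q + ((0:ℝ), (1:ℝ), (0:ℝ))) = u q := by
    intro q
    have h := (hup q.1).1 q.2.1 q.2.2
    have e : q + ((0:ℝ), (1:ℝ), (0:ℝ)) = (q.1, q.2.1 + 1, q.2.2) := by
      obtain ⟨x, s, t⟩ := q; simp [Prod.ext_iff]
    rw [e]; exact h
  have hu_per3 : ∀ q : Pt, u (q + ((0:ℝ), (0:ℝ), (1:ℝ))) = u q := by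
    intro q
    have h := (hup q.1).2 q.2.1 q.2.2
    have e : q + ((0:ℝ), (0:ℝ), (1:ℝ)) = (q.1, q.2.1, q.2.2 + 1) := by
      obtain ⟨x, s, t⟩ := q; simp [Prod.ext_iff]
    rw [e]; exact h
  have hu_shift2 : ∀ x s t : ℝ, fderiv ℝ u (x, s + 1, t) = fderiv ℝ u (x, s, t) := by
    intro x s t
    have e : ((x, s + 1, t) : Pt) = (x, s, t) + ((0:ℝ), (1:ℝ), (0:ℝ)) := by simp [Prod.ext_iff]
    rw [e, fderiv_shift u hu' _ hu_per2 (x, s, t)]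
  have hu_shift3 : ∀ x s t : ℝ, fderiv ℝ u (x, s, t + 1) = fderiv ℝ u (x, s, t) := by
    intro x s t
    have e : ((x, s, t + 1) : Pt) = (x, s, t) + ((0:ℝ), (0:ℝ), (1:ℝ)) := by simp [Prod.ext_iff]
    rw [e, fderiv_shift u hu' _ hu_per3 (x, s, t)]
  -- the three vanishing boundary integrals
  have hI1 : ∫ p in Cube ε, fderiv ℝ W p ((1:ℝ), (0:ℝ), (0:ℝ)) = 0 := by
    refine int_zero_1 hε.le W hW (fun z => ?_) (fun z => ?_)
    · rw [hWdef]; simp [(hbv z).1]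
    · rw [hWdef]; simp [(hbv z).2]
  have hI2 : ∫ p in Cube ε, fderiv ℝ Q p ((0:ℝ), (1:ℝ), (0:ℝ)) = 0 := by
    refine int_zero_2 Q hQ (fun x s t => ?_)
    rw [hQdef]
    have h1 : v (x, s + 1, t) = v (x, s, t) := (hvp x).1 s t
    simp only [h1, hu_shift2 x s t]
  have hI3 : ∫ p in Cube ε, fderiv ℝ Q p ((0:ℝ), (0:ℝ), (1:ℝ)) = 0 := by
    refine int_zero_3 Q hQ (fun x s t => ?_)
    rw [hQdef]
    have h1 : v (x, s, t + 1) = v (x, s, t) := (hvp x).2 s t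
    simp only [h1, hu_shift3 x s t]
  -- real/imaginary part versions
  have hReIm : ∀ (g : Pt → ℂ) (w : Pt), ContDiff ℝ (⊤ : ℕ∞) g →
      (∫ p in Cube ε, fderiv ℝ g p w) = 0 →
      ((∫ p in Cube ε, (fderiv ℝ g p w).re) = 0 ∧ (∫ p in Cube ε, (fderiv ℝ g p w).im) = 0) := by
    intro g w hg h0
    have hint : IntegrableOn (fun p => fderiv ℝ g p w) (Cube ε) volume :=
      (fd_cont g hg w).continuousOn.integrableOn_compact (μ := volume) (cube_compact ε)
    constructor
    · have h := integral_re hint; rw [h0] at h; simpa using h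
    · have h := integral_im hint; rw [h0] at h; simpa using h
  have hRe1 := (hReIm W _ hW hI1).1
  have hIm2 := (hReIm Q _ hQ hI2).2
  have hRe3 := (hReIm Q _ hQ hI3).1
  -- pointwise key identity
  have key : ∀ p : Pt,
      (‖fderiv ℝ u p ((1:ℝ), (0:ℝ), (0:ℝ)) -
          Complex.I * (-(fderiv ℝ v p ((0:ℝ), (1:ℝ), (0:ℝ))) +
            Complex.I * fderiv ℝ v p ((0:ℝ), (0:ℝ), (1:ℝ)) + (starRingEnd ℂ) (a p.2) * v p)‖ ^ 2 +
        ‖fderiv ℝ v p ((1:ℝ), (0:ℝ), (0:ℝ)) +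
          Complex.I * (fderiv ℝ u p ((0:ℝ), (1:ℝ), (0:ℝ)) +
            Complex.I * fderiv ℝ u p ((0:ℝ), (0:ℝ), (1:ℝ)) + a p.2 * u p)‖ ^ 2) -
      (‖fderiv ℝ u p ((1:ℝ), (0:ℝ), (0:ℝ))‖ ^ 2 + ‖fderiv ℝ v p ((1:ℝ), (0:ℝ), (0:ℝ))‖ ^ 2 +
        ‖-(fderiv ℝ v p ((0:ℝ), (1:ℝ), (0:ℝ))) + Complex.I * fderiv ℝ v p ((0:ℝ), (0:ℝ), (1:ℝ)) +
          (starRingEnd ℂ) (a p.2) * v p‖ ^ 2 +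
        ‖fderiv ℝ u p ((0:ℝ), (1:ℝ), (0:ℝ)) + Complex.I * fderiv ℝ u p ((0:ℝ), (0:ℝ), (1:ℝ)) +
          a p.2 * u p‖ ^ 2) =
      2 * (fderiv ℝ W p ((1:ℝ), (0:ℝ), (0:ℝ))).re +
        (2 * (fderiv ℝ Q p ((0:ℝ), (1:ℝ), (0:ℝ))).im +
          2 * (fderiv ℝ Q p ((0:ℝ), (0:ℝ), (1:ℝ))).re) := by
    intro p
    have hdu2 : DifferentiableAt ℝ (fun q => fderiv ℝ u q ((0:ℝ), (1:ℝ), (0:ℝ))) p :=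
      ((fd_smooth u hu _).differentiable (by simp)) p
    have hdu3 : DifferentiableAt ℝ (fun q => fderiv ℝ u q ((0:ℝ), (0:ℝ), (1:ℝ))) p :=
      ((fd_smooth u hu _).differentiable (by simp)) p
    have hdu1 : DifferentiableAt ℝ (fun q => fderiv ℝ u q ((1:ℝ), (0:ℝ), (0:ℝ))) p :=
      ((fd_smooth u hu _).differentiable (by simp)) p
    -- derivative of W in the x₁ direction
    have hWd : HasDir W p ((1:ℝ), (0:ℝ), (0:ℝ))
        ((Complex.I * (starRingEnd ℂ) (fderiv ℝ v p ((1:ℝ), (0:ℝ), (0:ℝ)))) *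
            (fderiv ℝ u p ((0:ℝ), (1:ℝ), (0:ℝ)) + Complex.I * fderiv ℝ u p ((0:ℝ), (0:ℝ), (1:ℝ)) +
              a p.2 * u p) +
          (Complex.I * (starRingEnd ℂ) (v p)) *
            ((fderiv ℝ (fun q => fderiv ℝ u q ((0:ℝ), (1:ℝ), (0:ℝ))) p ((1:ℝ), (0:ℝ), (0:ℝ)) +
              Complex.I * fderiv ℝ (fun q => fderiv ℝ u q ((0:ℝ), (0:ℝ), (1:ℝ))) p
                ((1:ℝ), (0:ℝ), (0:ℝ))) +
              (0 * u p + a p.2 * fderiv ℝ u p ((1:ℝ), (0:ℝ), (0:ℝ))))) := by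
      have h := (((hasDir_fderiv _ (hv' p)).conj.const_mul Complex.I).mul
        (((hasDir_fderiv _ hdu2).add ((hasDir_fderiv _ hdu3).const_mul Complex.I)).add
          ((hasDir_asnd_e1 a ha' p).mul (hasDir_fderiv _ (hu' p)))))
      rw [hWdef]
      convert h using 2 <;> ring
    have hW1 := hWd.fderiv_eq
    -- derivative of Q in the x₂ direction, using symmetry of second derivatives
    have hQd2 : HasDir Q p ((0:ℝ), (1:ℝ), (0:ℝ))
        ((starRingEnd ℂ) (fderiv ℝ v p ((0:ℝ), (1:ℝ), (0:ℝ))) *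
            fderiv ℝ u p ((1:ℝ), (0:ℝ), (0:ℝ)) +
          (starRingEnd ℂ) (v p) *
            fderiv ℝ (fun q => fderiv ℝ u q ((1:ℝ), (0:ℝ), (0:ℝ))) p ((0:ℝ), (1:ℝ), (0:ℝ))) := by
      have h := ((hasDir_fderiv ((0:ℝ), (1:ℝ), (0:ℝ)) (hv' p)).conj.mul
        (hasDir_fderiv ((0:ℝ), (1:ℝ), (0:ℝ)) hdu1))
      rw [hQdef]
      convert h using 2
    have hQ2 := hQd2.fderiv_eq
    rw [dd_symm u hu p ((0:ℝ), (1:ℝ), (0:ℝ)) ((1:ℝ), (0:ℝ), (0:ℝ))] at hQ2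
    have hQd3 : HasDir Q p ((0:ℝ), (0:ℝ), (1:ℝ))
        ((starRingEnd ℂ) (fderiv ℝ v p ((0:ℝ), (0:ℝ), (1:ℝ))) *
            fderiv ℝ u p ((1:ℝ), (0:ℝ), (0:ℝ)) +
          (starRingEnd ℂ) (v p) *
            fderiv ℝ (fun q => fderiv ℝ u q ((1:ℝ), (0:ℝ), (0:ℝ))) p ((0:ℝ), (0:ℝ), (1:ℝ))) := by
      have h := ((hasDir_fderiv ((0:ℝ), (0:ℝ), (1:ℝ)) (hv' p)).conj.mul
        (hasDir_fderiv ((0:ℝ), (0:ℝ), (1:ℝ)) hdu1))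
      rw [hQdef]
      convert h using 2
    have hQ3 := hQd3.fderiv_eq
    rw [dd_symm u hu p ((0:ℝ), (0:ℝ), (1:ℝ)) ((1:ℝ), (0:ℝ), (0:ℝ))] at hQ3
    exact pointwise_alg (u p) (v p) (fderiv ℝ u p ((1:ℝ), (0:ℝ), (0:ℝ)))
      (fderiv ℝ u p ((0:ℝ), (1:ℝ), (0:ℝ))) (fderiv ℝ u p ((0:ℝ), (0:ℝ), (1:ℝ)))
      (fderiv ℝ v p ((1:ℝ), (0:ℝ), (0:ℝ))) (fderiv ℝ v p ((0:ℝ), (1:ℝ), (0:ℝ)))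
      (fderiv ℝ v p ((0:ℝ), (0:ℝ), (1:ℝ)))
      (fderiv ℝ (fun q => fderiv ℝ u q ((0:ℝ), (1:ℝ), (0:ℝ))) p ((1:ℝ), (0:ℝ), (0:ℝ)))
      (fderiv ℝ (fun q => fderiv ℝ u q ((0:ℝ), (0:ℝ), (1:ℝ))) p ((1:ℝ), (0:ℝ), (0:ℝ)))
      (a p.2) _ _ _ (hW1.trans (by ring)) hQ2 hQ3 |>.trans (add_assoc _ _ _)
  -- continuity of all the integrands
  have c_u1 : Continuous fun p : Pt => fderiv ℝ u p ((1:ℝ), (0:ℝ), (0:ℝ)) := fd_cont u hu _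
  have c_u2 : Continuous fun p : Pt => fderiv ℝ u p ((0:ℝ), (1:ℝ), (0:ℝ)) := fd_cont u hu _
  have c_u3 : Continuous fun p : Pt => fderiv ℝ u p ((0:ℝ), (0:ℝ), (1:ℝ)) := fd_cont u hu _
  have c_v1 : Continuous fun p : Pt => fderiv ℝ v p ((1:ℝ), (0:ℝ), (0:ℝ)) := fd_cont v hv _
  have c_v2 : Continuous fun p : Pt => fderiv ℝ v p ((0:ℝ), (1:ℝ), (0:ℝ)) := fd_cont v hv _
  have c_v3 : Continuous fun p : Pt => fderiv ℝ v p ((0:ℝ), (0:ℝ), (1:ℝ)) := fd_cont v hv _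
  have c_ap : Continuous fun p : Pt => a p.2 := ha.continuous.comp continuous_snd
  have c_B : Continuous fun p : Pt => fderiv ℝ u p ((0:ℝ), (1:ℝ), (0:ℝ)) +
      Complex.I * fderiv ℝ u p ((0:ℝ), (0:ℝ), (1:ℝ)) + a p.2 * u p :=
    (c_u2.add (continuous_const.mul c_u3)).add (c_ap.mul hu.continuous)
  have c_C : Continuous fun p : Pt => -(fderiv ℝ v p ((0:ℝ), (1:ℝ), (0:ℝ))) +
      Complex.I * fderiv ℝ v p ((0:ℝ), (0:ℝ), (1:ℝ)) + (starRingEnd ℂ) (a p.2) * v p :=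
    (c_v2.neg.add (continuous_const.mul c_v3)).add
      ((Complex.continuous_conj.comp c_ap).mul hv.continuous)
  have hLc : Continuous fun p : Pt =>
      ‖fderiv ℝ u p ((1:ℝ), (0:ℝ), (0:ℝ)) -
          Complex.I * (-(fderiv ℝ v p ((0:ℝ), (1:ℝ), (0:ℝ))) +
            Complex.I * fderiv ℝ v p ((0:ℝ), (0:ℝ), (1:ℝ)) + (starRingEnd ℂ) (a p.2) * v p)‖ ^ 2 +
        ‖fderiv ℝ v p ((1:ℝ), (0:ℝ), (0:ℝ)) +
          Complex.I * (fderiv ℝ u p ((0:ℝ), (1:ℝ), (0:ℝ)) +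
            Complex.I * fderiv ℝ u p ((0:ℝ), (0:ℝ), (1:ℝ)) + a p.2 * u p)‖ ^ 2 :=
    (((c_u1.sub (continuous_const.mul c_C)).norm.pow 2).add
      ((c_v1.add (continuous_const.mul c_B)).norm.pow 2))
  have hRc : Continuous fun p : Pt =>
      ‖fderiv ℝ u p ((1:ℝ), (0:ℝ), (0:ℝ))‖ ^ 2 + ‖fderiv ℝ v p ((1:ℝ), (0:ℝ), (0:ℝ))‖ ^ 2 +
        ‖-(fderiv ℝ v p ((0:ℝ), (1:ℝ), (0:ℝ))) + Complex.I * fderiv ℝ v p ((0:ℝ), (0:ℝ), (1:ℝ)) +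
          (starRingEnd ℂ) (a p.2) * v p‖ ^ 2 +
        ‖fderiv ℝ u p ((0:ℝ), (1:ℝ), (0:ℝ)) + Complex.I * fderiv ℝ u p ((0:ℝ), (0:ℝ), (1:ℝ)) +
          a p.2 * u p‖ ^ 2 :=
    (((c_u1.norm.pow 2).add (c_v1.norm.pow 2)).add (c_C.norm.pow 2)).add (c_B.norm.pow 2)
  have hLint := hLc.continuousOn.integrableOn_compact (μ := volume) (cube_compact ε)
  have hRint := hRc.continuousOn.integrableOn_compact (μ := volume) (cube_compact ε)
  -- integrability of the divergence pieces
  have i1 : IntegrableOn (fun p : Pt => 2 * (fderiv ℝ W p ((1:ℝ), (0:ℝ), (0:ℝ))).re)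
      (Cube ε) volume :=
    ((continuous_const.mul ((Complex.continuous_re).comp
      (fd_cont W hW _))).continuousOn).integrableOn_compact (μ := volume) (cube_compact ε)
  have i2 : IntegrableOn (fun p : Pt => 2 * (fderiv ℝ Q p ((0:ℝ), (1:ℝ), (0:ℝ))).im)
      (Cube ε) volume :=
    ((continuous_const.mul ((Complex.continuous_im).comp
      (fd_cont Q hQ _))).continuousOn).integrableOn_compact (μ := volume) (cube_compact ε)
  have i3 : IntegrableOn (fun p : Pt => 2 * (fderiv ℝ Q p ((0:ℝ), (0:ℝ), (1:ℝ))).re)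
      (Cube ε) volume :=
    ((continuous_const.mul ((Complex.continuous_re).comp
      (fd_cont Q hQ _))).continuousOn).integrableOn_compact (μ := volume) (cube_compact ε)
  -- final computation
  rw [← sub_eq_zero, ← integral_sub hLint hRint]
  calc ∫ p in Cube ε, _ = ∫ p in Cube ε,
        (2 * (fderiv ℝ W p ((1:ℝ), (0:ℝ), (0:ℝ))).re +
          (2 * (fderiv ℝ Q p ((0:ℝ), (1:ℝ), (0:ℝ))).im +
            2 * (fderiv ℝ Q p ((0:ℝ), (0:ℝ), (1:ℝ))).re)) :=
      integral_congr_ae (Filter.Eventually.of_forall key)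
    _ = 0 := by
      have i23 : IntegrableOn (fun p : Pt => 2 * (fderiv ℝ Q p ((0:ℝ), (1:ℝ), (0:ℝ))).im +
          2 * (fderiv ℝ Q p ((0:ℝ), (0:ℝ), (1:ℝ))).re) (Cube ε) volume := i2.add i3
      rw [integral_add i1 i23, integral_add i2 i3,
        integral_const_mul, integral_const_mul, integral_const_mul, hRe1, hIm2, hRe3]
      ring
end
end
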